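/- Let (Γ, N) and (Γ', N') be equivalent link-regular numbered graphs. Suppose σ ⊆ VΓ and σ' ⊆ VΓ' are cliques with N(σ) = N'(σ'). Then for any subcliques τ ⊆ σ and τ' ⊆ σ' with N(τ) = N'(τ'), one has N(Lk(σ; τ)) = N'(Lk(σ'; τ')) as multisets. -/
import Mathlib


variable {V V' : Type*}

/-- The link of a finite set of vertices `σ`: vertices `v ∉ σ` with `σ ∪ {v}` a clique. -/
noncomputable def lk [Fintype V] (G : SimpleGraph V) (σ : Finset V) : Finset V :=
  Set.Finite.toFinset (Set.toFinite {v : V | v ∉ σ ∧ G.IsClique (insert v (σ : Set V))})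

/-- `Lk(σ; τ)`: vertices `v ∉ σ` with `Lk(v) ∩ σ = τ`. -/
noncomputable def lkIn [Fintype V] (G : SimpleGraph V) (σ τ : Finset V) : Finset V :=
  Set.Finite.toFinset (Set.toFinite
    {v : V | v ∉ σ ∧ G.neighborSet v ∩ (σ : Set V) = (τ : Set V)})

/-- `N(U)`: the multiset of vertex numbers of a finite set of vertices. -/
def NM (N : V → ℕ) (U : Finset V) : Multiset ℕ := U.val.map N

/-- Link-regularity of a numbered graph. -/
def LinkRegular [Fintype V] (G : SimpleGraph V) (N : V → ℕ) : Prop :=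
  ∀ σ₁ σ₂ : Finset V, G.IsClique (σ₁ : Set V) → G.IsClique (σ₂ : Set V) →
    NM N σ₁ = NM N σ₂ → NM N (lk G σ₁) = NM N (lk G σ₂)

/-- Equivalence of link-regular numbered graphs. -/
def EquivLinkRegular [Fintype V] [Fintype V'] (G : SimpleGraph V) (N : V → ℕ)
    (G' : SimpleGraph V') (N' : V' → ℕ) : Prop :=
  NM N Finset.univ = NM N' Finset.univ ∧
  ∀ (σ : Finset V) (σ' : Finset V'), G.IsClique (σ : Set V) → G'.IsClique (σ' : Set V') →
    NM N σ = NM N' σ' → NM N (lk G σ) = NM N' (lk G' σ')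

/- ### Auxiliary lemmas -/

lemma mem_lk_iff [Fintype V] {G : SimpleGraph V} {σ : Finset V} {v : V} :
    v ∈ lk G σ ↔ v ∉ σ ∧ G.IsClique (insert v (σ : Set V)) := by
  simp [lk]

lemma mem_lkIn_iff [Fintype V] {G : SimpleGraph V} {σ τ : Finset V} {v : V} :
    v ∈ lkIn G σ τ ↔ v ∉ σ ∧ G.neighborSet v ∩ (σ : Set V) = (τ : Set V) := by
  simp [lkIn]

lemma lkIn_self [Fintype V] {G : SimpleGraph V} {σ : Finset V}
    (hσ : G.IsClique (σ : Set V)) : lkIn G σ σ = lk G σ := by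
  ext v
  rw [mem_lk_iff, mem_lkIn_iff]
  refine and_congr_right fun hv => ?_
  constructor
  · intro h
    rw [SimpleGraph.isClique_insert]
    refine ⟨hσ, fun b hb _ => ?_⟩
    have : b ∈ G.neighborSet v ∩ (σ : Set V) := by rw [h]; exact hb
    exact this.1
  · intro h
    ext u
    simp only [Set.mem_inter_iff, SimpleGraph.mem_neighborSet]
    constructor
    · exact fun hu => hu.2
    · intro hu
      have hne : v ≠ u := fun he => hv (by simpa [he] using hu)
      exact ⟨h (Set.mem_insert v _) (Set.mem_insert_of_mem _ hu) hne, hu⟩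

lemma NM_union_of_disjoint [DecidableEq V] (N : V → ℕ) {A B : Finset V}
    (h : Disjoint A B) : NM N (A ∪ B) = NM N A + NM N B := by
  rw [← Finset.disjUnion_eq_union A B h]
  show (A.val + B.val).map N = _
  rw [Multiset.map_add]
  rfl

lemma NM_sdiff_add [DecidableEq V] (N : V → ℕ) {A B : Finset V} (h : B ⊆ A) :
    NM N A = NM N B + NM N (A \ B) := by
  rw [← NM_union_of_disjoint N Finset.disjoint_sdiff, Finset.union_sdiff_of_subset h]

lemma NM_card (N : V → ℕ) (A : Finset V) : Multiset.card (NM N A) = A.card := by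
  simp [NM]

/-- Decomposition of the link of a subclique `τ ⊆ σ`. -/
lemma lk_decomp [Fintype V] [DecidableEq V] (G : SimpleGraph V) (N : V → ℕ)
    {σ τ : Finset V} (hσ : G.IsClique (σ : Set V)) (hτ : τ ⊆ σ) :
    NM N (lk G τ) = NM N (σ \ τ) +
      ∑ s ∈ (σ \ τ).powerset, NM N (lkIn G σ (τ ∪ s)) := by
  classical
  have hτσ : G.IsClique (τ : Set V) := hσ.subset (Finset.coe_subset.2 hτ)
  -- pairwise disjointness of the pieces
  have hpd : ((σ \ τ).powerset : Set (Finset V)).PairwiseDisjoint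
      (fun s => lkIn G σ (τ ∪ s)) := by
    intro s₁ h₁ s₂ h₂ hne
    simp only [Finset.coe_powerset, Set.mem_preimage, Set.mem_powerset_iff,
      Finset.coe_subset] at h₁ h₂
    refine Finset.disjoint_left.2 fun v hv₁ hv₂ => hne ?_
    rw [mem_lkIn_iff] at hv₁ hv₂
    have : ((τ ∪ s₁ : Finset V) : Set V) = ((τ ∪ s₂ : Finset V) : Set V) := by
      rw [← hv₁.2, ← hv₂.2]
    have hcup : (τ ∪ s₁ : Finset V) = τ ∪ s₂ := Finset.coe_injective this
    have h1 : s₁ = (τ ∪ s₁) \ τ := by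
      rw [Finset.union_sdiff_left]
      exact (Finset.sdiff_eq_self_iff_disjoint.2
        (Finset.disjoint_sdiff.mono_right h₁).symm).symm
    have h2 : s₂ = (τ ∪ s₂) \ τ := by
      rw [Finset.union_sdiff_left]
      exact (Finset.sdiff_eq_self_iff_disjoint.2
        (Finset.disjoint_sdiff.mono_right h₂).symm).symm
    rw [h1, h2, hcup]
  have hd : Disjoint (σ \ τ)
      ((σ \ τ).powerset.disjiUnion (fun s => lkIn G σ (τ ∪ s)) hpd) := by
    refine Finset.disjoint_left.2 fun v hv hv' => ?_
    rw [Finset.mem_disjiUnion] at hv'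
    obtain ⟨s, -, hs⟩ := hv'
    exact (mem_lkIn_iff.1 hs).1 (Finset.mem_sdiff.1 hv).1
  have hset : lk G τ = (σ \ τ).disjUnion
      ((σ \ τ).powerset.disjiUnion (fun s => lkIn G σ (τ ∪ s)) hpd) hd := by
    ext v
    rw [Finset.mem_disjUnion, Finset.mem_disjiUnion, mem_lk_iff]
    constructor
    · rintro ⟨hvτ, hcl⟩
      by_cases hvσ : v ∈ σ
      · exact Or.inl (Finset.mem_sdiff.2 ⟨hvσ, hvτ⟩)
      · refine Or.inr ⟨(σ.filter (fun u => G.Adj v u)) \ τ,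
          Finset.mem_powerset.2 (Finset.sdiff_subset_sdiff (Finset.filter_subset _ _) le_rfl),
          mem_lkIn_iff.2 ⟨hvσ, ?_⟩⟩
        ext u
        simp only [Set.mem_inter_iff, SimpleGraph.mem_neighborSet, Finset.coe_union,
          Set.mem_union, Finset.mem_coe, Finset.mem_sdiff, Finset.mem_filter]
        constructor
        · rintro ⟨hadj, huσ⟩
          by_cases huτ : u ∈ τ
          · exact Or.inl huτ
          · exact Or.inr ⟨⟨huσ, hadj⟩, huτ⟩
        · rintro (huτ | ⟨⟨huσ, hadj⟩, -⟩)
          · have hne : v ≠ u := fun he => hvσ (he ▸ hτ huτ)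
            exact ⟨hcl (Set.mem_insert v _) (Set.mem_insert_of_mem _ huτ) hne, hτ huτ⟩
          · exact ⟨hadj, huσ⟩
    · rintro (hv | ⟨s, -, hv⟩)
      · rw [Finset.mem_sdiff] at hv
        refine ⟨hv.2, hσ.subset ?_⟩
        rw [Set.insert_subset_iff]
        exact ⟨hv.1, Finset.coe_subset.2 hτ⟩
      · rw [mem_lkIn_iff] at hv
        have hvτ : v ∉ τ := fun h => hv.1 (hτ h)
        refine ⟨hvτ, ?_⟩
        rw [SimpleGraph.isClique_insert]
        refine ⟨hτσ, fun b hb _ => ?_⟩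
        have : b ∈ G.neighborSet v ∩ (σ : Set V) := by
          rw [hv.2, Finset.coe_union]
          exact Set.mem_union_left _ hb
        exact this.1
  have hval : (lk G τ).val = (σ \ τ).val +
      (σ \ τ).powerset.val.bind (fun s => (lkIn G σ (τ ∪ s)).val) := by
    rw [hset]; rfl
  have : NM N (lk G τ) = NM N (σ \ τ) +
      ((σ \ τ).powerset.val.bind (fun s => (lkIn G σ (τ ∪ s)).val)).map N := by
    rw [NM, hval, Multiset.map_add]; rfl
  rw [this]
  congr 1
  rw [Multiset.map_bind]
  simp only [Finset.sum, NM]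
  rw [Multiset.bind]
  rfl

/-- A number-preserving bijection out of equal number multisets. -/
lemma exists_numbered_bij [Nonempty V'] [DecidableEq V] [DecidableEq V']
    (N : V → ℕ) (N' : V' → ℕ) :
    ∀ (s : Finset V) (t : Finset V'), s.val.map N = t.val.map N' →
      ∃ f : V → V', Set.InjOn f ↑s ∧ s.image f = t ∧ ∀ x ∈ s, N' (f x) = N x := by
  intro s
  induction s using Finset.induction_on with
  | empty =>
    intro t ht
    have ht0 : t = ∅ := by
      have hv : Multiset.map N' t.val = 0 := by simpa using ht.symm
      exact Finset.val_eq_zero.1 (Multiset.map_eq_zero.1 hv)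
    subst ht0
    exact ⟨fun _ => Classical.arbitrary V', by simp [Set.InjOn], by simp, by simp⟩
  | @insert a s ha ih =>
    intro t ht
    have hins : (insert a s).val = a ::ₘ s.val := Finset.insert_val_of_notMem ha
    rw [hins, Multiset.map_cons] at ht
    have hmem : N a ∈ t.val.map N' := by rw [← ht]; exact Multiset.mem_cons_self _ _
    obtain ⟨b, hb, hNb⟩ := Multiset.mem_map.1 hmem
    have hbt : b ∈ t := hb
    have htval : t.val = b ::ₘ (t.erase b).val := by
      rw [Finset.erase_val, Multiset.cons_erase hb]
    rw [htval, Multiset.map_cons, hNb] at ht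
    have hrest : s.val.map N = (t.erase b).val.map N' := by
      exact (Multiset.cons_inj_right _).1 ht
    obtain ⟨f, hinj, himg, hpres⟩ := ih (t.erase b) hrest
    refine ⟨Function.update f a b, ?_, ?_, ?_⟩
    · intro x hx y hy hxy
      simp only [Finset.coe_insert, Set.mem_insert_iff, Finset.mem_coe] at hx hy
      rcases hx with rfl | hx <;> rcases hy with rfl | hy
      · rfl
      · exfalso
        rw [Function.update_self, Function.update_of_ne (fun h => ha (by rwa [h] at hy))] at hxy
        have : f y ∈ t.erase b := himg ▸ Finset.mem_image_of_mem f hy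
        exact (Finset.ne_of_mem_erase this) hxy.symm
      · exfalso
        rw [Function.update_self, Function.update_of_ne (fun h => ha (by rwa [h] at hx))] at hxy
        have : f x ∈ t.erase b := himg ▸ Finset.mem_image_of_mem f hx
        exact (Finset.ne_of_mem_erase this) hxy
      · rw [Function.update_of_ne (fun h => ha (by rwa [h] at hx)),
          Function.update_of_ne (fun h => ha (by rwa [h] at hy))] at hxy
        exact hinj hx hy hxy
    · rw [Finset.image_insert, Function.update_self]
      have : s.image (Function.update f a b) = s.image f := by
        apply Finset.image_congr
        intro x hx
        exact Function.update_of_ne (fun h => ha (by rwa [h] at hx)) _ _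
      rw [this, himg, Finset.insert_erase hbt]
    · intro x hx
      rcases Finset.mem_insert.1 hx with rfl | hx
      · rw [Function.update_self]; exact hNb
      · rw [Function.update_of_ne (fun h => ha (by rwa [h] at hx))]
        exact hpres x hx

theorem stmt5 [Fintype V] [Fintype V'] (G : SimpleGraph V) (G' : SimpleGraph V')
    (N : V → ℕ) (N' : V' → ℕ) (hN : ∀ v, 2 ≤ N v) (hN' : ∀ v, 2 ≤ N' v)
    (hLR : LinkRegular G N) (hLR' : LinkRegular G' N')
    (hEq : EquivLinkRegular G N G' N')
    (σ τ : Finset V) (σ' τ' : Finset V')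
    (hσ : G.IsClique (σ : Set V)) (hσ' : G'.IsClique (σ' : Set V'))
    (hNσ : NM N σ = NM N' σ')
    (hτ : τ ⊆ σ) (hτ' : τ' ⊆ σ') (hNτ : NM N τ = NM N' τ') :
    NM N (lkIn G σ τ) = NM N' (lkIn G' σ' τ') := by
  classical
  suffices H : ∀ n (σ τ : Finset V) (σ' τ' : Finset V'),
      G.IsClique (σ : Set V) → G'.IsClique (σ' : Set V') →
      NM N σ = NM N' σ' → τ ⊆ σ → τ' ⊆ σ' → NM N τ = NM N' τ' →
      (σ \ τ).card = n → NM N (lkIn G σ τ) = NM N' (lkIn G' σ' τ') by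
    exact H (σ \ τ).card σ τ σ' τ' hσ hσ' hNσ hτ hτ' hNτ rfl
  intro n
  induction n using Nat.strong_induction_on with
  | _ n ih =>
  intro σ τ σ' τ' hσ hσ' hNσ hτ hτ' hNτ hcard
  -- basic multiset equality for sdiffs
  have hNd : NM N (σ \ τ) = NM N' (σ' \ τ') := by
    have h1 := NM_sdiff_add N hτ
    have h2 := NM_sdiff_add N' hτ'
    rw [h1, hNτ] at hNσ
    rw [h2] at hNσ
    exact add_left_cancel hNσ
  have hcard' : (σ' \ τ').card = n := by
    rw [← NM_card N' (σ' \ τ'), ← hNd, NM_card, hcard]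
  rcases n with _ | n
  · -- base case : τ = σ
    have hτeq : τ = σ := le_antisymm hτ (Finset.sdiff_eq_empty_iff_subset.1
      (Finset.card_eq_zero.1 hcard))
    have hτeq' : τ' = σ' := le_antisymm hτ' (Finset.sdiff_eq_empty_iff_subset.1
      (Finset.card_eq_zero.1 hcard'))
    subst hτeq hτeq'
    rw [lkIn_self hσ, lkIn_self hσ']
    exact hEq.2 τ τ' hσ hσ' hNσ
  · -- inductive step
    have hdne : (σ \ τ).Nonempty := Finset.card_pos.1 (by omega)
    have hdne' : (σ' \ τ').Nonempty := Finset.card_pos.1 (by omega)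
    have : Nonempty V' := ⟨hdne'.choose⟩
    obtain ⟨f, hinj, himg, hpres⟩ := exists_numbered_bij N N' (σ \ τ) (σ' \ τ') hNd
    -- cliques of the subsets
    have hτcl : G.IsClique (τ : Set V) := hσ.subset (Finset.coe_subset.2 hτ)
    have hτcl' : G'.IsClique (τ' : Set V') := hσ'.subset (Finset.coe_subset.2 hτ')
    -- the two decompositions
    have hdec := lk_decomp G N hσ hτ
    have hdec' := lk_decomp G' N' hσ' hτ'
    have hlkτ : NM N (lk G τ) = NM N' (lk G' τ') := hEq.2 τ τ' hτcl hτcl' hNτ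
    have hsum : ∑ s ∈ (σ \ τ).powerset, NM N (lkIn G σ (τ ∪ s)) =
        ∑ s' ∈ (σ' \ τ').powerset, NM N' (lkIn G' σ' (τ' ∪ s')) := by
      have := hlkτ
      rw [hdec, hdec', hNd] at this
      exact add_left_cancel this
    -- split off the empty set from both sums
    have hmem0 : (∅ : Finset V) ∈ (σ \ τ).powerset := Finset.empty_mem_powerset _
    have hmem0' : (∅ : Finset V') ∈ (σ' \ τ').powerset := Finset.empty_mem_powerset _
    rw [← Finset.add_sum_erase _ _ hmem0, ← Finset.add_sum_erase _ _ hmem0',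
      Finset.union_empty, Finset.union_empty] at hsum
    -- the sums over nonempty subsets coincide, via the bijection induced by f
    have hrest : ∑ s ∈ ((σ \ τ).powerset).erase ∅, NM N (lkIn G σ (τ ∪ s)) =
        ∑ s' ∈ ((σ' \ τ').powerset).erase ∅, NM N' (lkIn G' σ' (τ' ∪ s')) := by
      refine Finset.sum_bij (fun s _ => s.image f) ?_ ?_ ?_ ?_
      · -- maps into the target index set
        intro s hs
        rw [Finset.mem_erase, Finset.mem_powerset] at hs ⊢
        obtain ⟨hs0, hssub⟩ := hs
        constructor
        · simp only [ne_eq, Finset.image_eq_empty]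
          exact hs0
        · rw [← himg]
          exact Finset.image_subset_image hssub
      · -- injectivity
        intro s₁ hs₁ s₂ hs₂ heq
        rw [Finset.mem_erase, Finset.mem_powerset] at hs₁ hs₂
        ext x
        constructor
        · intro hx
          have hfx : f x ∈ s₂.image f := by
            rw [show s₂.image f = s₁.image f from heq.symm]
            exact Finset.mem_image_of_mem f hx
          obtain ⟨y, hy, hyx⟩ := Finset.mem_image.1 hfx
          have := hinj (hs₂.2 hy) (hs₁.2 hx) hyx
          exact this ▸ hy
        · intro hx
          have hfx : f x ∈ s₁.image f := by
            rw [show s₁.image f = s₂.image f from heq]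
            exact Finset.mem_image_of_mem f hx
          obtain ⟨y, hy, hyx⟩ := Finset.mem_image.1 hfx
          have := hinj (hs₁.2 hy) (hs₂.2 hx) hyx
          exact this ▸ hy
      · -- surjectivity
        intro s' hs'
        rw [Finset.mem_erase, Finset.mem_powerset] at hs'
        obtain ⟨hs0', hssub'⟩ := hs'
        refine ⟨(σ \ τ).filter (fun x => f x ∈ s'), ?_, ?_⟩
        · rw [Finset.mem_erase, Finset.mem_powerset]
          refine ⟨?_, Finset.filter_subset _ _⟩
          obtain ⟨y, hy⟩ := Finset.nonempty_iff_ne_empty.2 hs0'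
          have : y ∈ (σ' \ τ') := hssub' hy
          rw [← himg] at this
          obtain ⟨x, hx, hxy⟩ := Finset.mem_image.1 this
          intro h0
          have : x ∈ (σ \ τ).filter (fun x => f x ∈ s') :=
            Finset.mem_filter.2 ⟨hx, hxy ▸ hy⟩
          rw [h0] at this
          exact absurd this (Finset.notMem_empty x)
        · ext y
          simp only [Finset.mem_image, Finset.mem_filter]
          constructor
          · rintro ⟨x, ⟨-, hfx⟩, rfl⟩
            exact hfx
          · intro hy
            have : y ∈ (σ' \ τ') := hssub' hy
            rw [← himg] at this
            obtain ⟨x, hx, hxy⟩ := Finset.mem_image.1 this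
            exact ⟨x, ⟨hx, hxy ▸ hy⟩, hxy⟩
      · -- equal summands, via the induction hypothesis
        intro s hs
        rw [Finset.mem_erase, Finset.mem_powerset] at hs
        obtain ⟨hs0, hssub⟩ := hs
        have hsne : s.Nonempty := Finset.nonempty_iff_ne_empty.2 hs0
        have hsubσ : τ ∪ s ⊆ σ :=
          Finset.union_subset hτ (hssub.trans (Finset.sdiff_subset))
        have himgsub : s.image f ⊆ σ' \ τ' := by
          rw [← himg]; exact Finset.image_subset_image hssub
        have hsubσ' : τ' ∪ s.image f ⊆ σ' :=
          Finset.union_subset hτ' (himgsub.trans (Finset.sdiff_subset))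
        have hdisj : Disjoint τ s :=
          Finset.disjoint_sdiff.mono_right hssub
        have hdisj' : Disjoint τ' (s.image f) :=
          Finset.disjoint_sdiff.mono_right himgsub
        have hNMs : NM N s = NM N' (s.image f) := by
          have hinjs : Set.InjOn f ↑s := hinj.mono (by exact_mod_cast hssub)
          rw [NM, NM, Finset.image_val_of_injOn hinjs, Multiset.map_map]
          apply Multiset.map_congr rfl
          intro x hx
          exact (hpres x (hssub hx)).symm
        have hNMun : NM N (τ ∪ s) = NM N' (τ' ∪ s.image f) := by
          rw [NM_union_of_disjoint N hdisj, NM_union_of_disjoint N' hdisj',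
            hNτ, hNMs]
        have hcltu : G.IsClique ((τ ∪ s : Finset V) : Set V) :=
          hσ.subset (Finset.coe_subset.2 hsubσ)
        have hcltu' : G'.IsClique ((τ' ∪ s.image f : Finset V') : Set V') :=
          hσ'.subset (Finset.coe_subset.2 hsubσ')
        have hcardlt : (σ \ (τ ∪ s)).card < n + 1 := by
          have h1 : (σ \ (τ ∪ s)).card = σ.card - (τ ∪ s).card :=
            Finset.card_sdiff_of_subset hsubσ
          have h2 : (τ ∪ s).card = τ.card + s.card :=
            Finset.card_union_of_disjoint hdisj
          have h3 : (σ \ τ).card = σ.card - τ.card := Finset.card_sdiff_of_subset hτ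
          have h4 : 1 ≤ s.card := Finset.card_pos.2 hsne
          have h5 : τ.card ≤ σ.card := Finset.card_le_card hτ
          omega
        exact ih _ hcardlt σ (τ ∪ s) σ' (τ' ∪ s.image f) hσ hσ' hNσ hsubσ hsubσ'
          hNMun rfl
    rw [hrest] at hsum
    exact add_right_cancel hsum
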